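/- arXiv:1701.01051 — 2 statements merged into one kernel-verified Lean document; each statement's English description precedes it below -/
import Mathlib

section
/- Every circuit-reversal equivalence class of orientations of M contains exactly one σ-compatible orientation. -/
open Matrix

/-- A vector with all entries in `{-1,0,1}`. -/
def SignVec {m : ℕ} (C : Fin m → ℤ) : Prop := ∀ e, C e = -1 ∨ C e = 0 ∨ C e = 1

/-- A signed circuit of `A`. -/
def IsCircuit {r m : ℕ} (A : Matrix (Fin r) (Fin m) ℤ) (C : Fin m → ℤ) : Prop :=
  SignVec C ∧ C ≠ 0 ∧ A.mulVec C = 0 ∧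
    ∀ v : Fin m → ℤ, v ≠ 0 → A.mulVec v = 0 →
      {e | v e ≠ 0} ⊆ {e | C e ≠ 0} → {e | v e ≠ 0} = {e | C e ≠ 0}

/-- An orientation of the matroid: a function `E → {-1,1}`. -/
def IsOrientation {m : ℕ} (O : Fin m → ℤ) : Prop := ∀ e, O e = 1 ∨ O e = -1

/-- One circuit reversal. -/
def CircuitReversal {r m : ℕ} (A : Matrix (Fin r) (Fin m) ℤ) (O O' : Fin m → ℤ) : Prop :=
  ∃ C : Fin m → ℤ, IsCircuit A C ∧ (∀ e, C e ≠ 0 → O e = C e) ∧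
    (∀ e, C e ≠ 0 → O' e = -O e) ∧ (∀ e, C e = 0 → O' e = O e)

/-- Circuit-reversal equivalence. -/
def CircEquiv {r m : ℕ} (A : Matrix (Fin r) (Fin m) ℤ) : (Fin m → ℤ) → (Fin m → ℤ) → Prop :=
  Relation.EqvGen (CircuitReversal A)

/-- `O` is σ-compatible (for the acyclic signature induced by `w`): every signed circuit
compatible with `O` has positive inner product with `w`. -/
def SigmaCompatible {r m : ℕ} (A : Matrix (Fin r) (Fin m) ℤ) (w : Fin m → ℝ)
    (O : Fin m → ℤ) : Prop :=
  ∀ C : Fin m → ℤ, IsCircuit A C → (∀ e, C e ≠ 0 → O e = C e) →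
    0 < ∑ e, w e * (C e : ℝ)


/-!
Existence: in a circuit-reversal class, an orientation maximising `∑ e, w e * O e` is
σ-compatible, because reversing a compatible circuit `C` with `w ⬝ C < 0` would increase the sum.

Uniqueness: equivalent orientations `O₁ ≠ O₂` differ by a nonzero vector of `ker A`, to which
some elementary vector of `ker A` (a nonzero kernel vector of minimal support) conforms in sign.
By Cramer's rule, total unimodularity forces an elementary vector to have constant absolute value
on its support, so its sign vector is a circuit `C`. It is compatible with `O₂` and `-C` is
compatible with `O₁`, but `w ⬝ C` and `w ⬝ (-C)` cannot both be positive.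
-/

open Function

namespace Matrix

theorem IsTotallyUnimodular.map {R S : Type*} [CommRing R] [CommRing S] {m n : Type*}
    {A : Matrix m n R} (hA : A.IsTotallyUnimodular) (f : R →+* S) :
    (A.map f).IsTotallyUnimodular := by
  intro k g h hg hh
  obtain ⟨s, hs⟩ := hA k g h hg hh
  refine ⟨s, ?_⟩
  rw [submatrix_map, ← RingHom.mapMatrix_apply, ← RingHom.map_det, ← hs, SignType.map_cast]

section OrderedField

variable {K : Type*} [Field K] [LinearOrder K] [IsStrictOrderedRing K] {m n : Type*}
  {A : Matrix m n K}

theorem IsTotallyUnimodular.det_submatrix_eq_zero_or_abs_eq_one (hA : A.IsTotallyUnimodular)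
    {ι : Type*} [Fintype ι] [DecidableEq ι] (f : ι → m) (g : ι → n) :
    (A.submatrix f g).det = 0 ∨ |(A.submatrix f g).det| = 1 := by
  obtain ⟨s, hs⟩ := (isTotallyUnimodular_iff_fintype A).mp hA ι f g
  rw [← hs]
  cases s <;> simp

/-- Cramer's rule: each `x i` is `c` times a ratio of two minors of `A`. -/
theorem IsTotallyUnimodular.eq_zero_or_abs_eq_of_mulVec_submatrix (hA : A.IsTotallyUnimodular)
    {ι : Type*} [Fintype ι] [DecidableEq ι] {f : ι → m} {g : ι → n}
    (hdet : (A.submatrix f g).det ≠ 0) {x : ι → K} {c : K} {j : n}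
    (hx : A.submatrix f g *ᵥ x = c • fun i => A (f i) j) (i : ι) :
    x i = 0 ∨ |x i| = |c| := by
  set M := A.submatrix f g
  have hcr : M.det • x = c • cramer M (fun i => A (f i) j) := by
    rw [← sub_eq_zero]
    refine eq_zero_of_mulVec_eq_zero hdet ?_
    rw [mulVec_sub, mulVec_smul, mulVec_smul, hx, mulVec_cramer, smul_comm, sub_self]
  have hupd : M.updateCol i (fun i => A (f i) j) = A.submatrix f (update g i j) := by
    ext k l
    by_cases hl : l = i
    · subst hl; simp [M]
    · simp [M, updateCol_ne hl, update_of_ne hl]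
  have h := congrArg abs (congrFun hcr i)
  simp only [Pi.smul_apply, smul_eq_mul, cramer_apply, hupd, abs_mul] at h
  rcases hA.det_submatrix_eq_zero_or_abs_eq_one f g with hM | hM
  · exact absurd hM hdet
  rcases hA.det_submatrix_eq_zero_or_abs_eq_one f (update g i j) with hD | hD
  · left; simpa [M, hM, hD] using h
  · right; simpa [M, hM, hD] using h

end OrderedField

theorem exists_det_submatrix_ne_zero {K : Type*} [Field K] {m n : Type*} [Fintype m]
    [Fintype n] [DecidableEq n] (N : Matrix m n K) (hN : Injective N.mulVec) :
    ∃ f : n → m, (N.submatrix f id).det ≠ 0 := by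
  obtain ⟨ι, a, ha, hspan, hli⟩ := exists_linearIndependent' K N.row
  have : Fintype ι := Fintype.ofInjective a ha
  have hcard : Fintype.card ι = Fintype.card n := by
    rw [← finrank_span_eq_card hli, hspan, ← rank_eq_finrank_span_row,
      rank, LinearMap.finrank_range_of_inj (f := N.mulVecLin) hN,
      Module.finrank_fintype_fun_eq_card]
  let e : n ≃ ι := Fintype.equivOfCardEq hcard.symm
  refine ⟨a ∘ e, ?_⟩
  rw [← isUnit_iff_ne_zero, ← isUnit_iff_isUnit_det, ← linearIndependent_rows_iff_isUnit]
  exact hli.comp e e.injective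

theorem mulVec_apply_eq_sum_of_support_subset {R : Type*} [NonUnitalNonAssocSemiring R]
    {m n : Type*} [Fintype n] (A : Matrix m n R) {z : n → R} {s : Finset n}
    (hz : ∀ e ∉ s, z e = 0) (i : m) : (A *ᵥ z) i = ∑ e ∈ s, A i e * z e :=
  (Finset.sum_subset (Finset.subset_univ s) fun e _ he => by rw [hz e he, mul_zero]).symm

theorem map_intCast_mulVec_eq_zero_iff {m n : Type*} [Fintype n] (A : Matrix m n ℤ)
    (v : n → ℤ) :
    A.map (Int.castRingHom ℚ) *ᵥ (Int.castRingHom ℚ ∘ v) = 0 ↔ A *ᵥ v = 0 := by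
  simp only [funext_iff, Pi.zero_apply, ← RingHom.map_mulVec, map_eq_zero_iff _
    (Int.castRingHom ℚ).injective_int]

end Matrix

section Conforms

variable {α n : Type*} [Zero α] [LinearOrder α]

def Conforms (u v : n → α) : Prop :=
  ∀ e, u e ≠ 0 → SignType.sign (u e) = SignType.sign (v e)

theorem Conforms.support_subset {u v : n → α} (h : Conforms u v) : support u ⊆ support v :=
  fun e he => sign_ne_zero.mp ((h e he) ▸ sign_ne_zero.mpr he)

theorem Conforms.trans {u v x : n → α} (huv : Conforms u v) (hvx : Conforms v x) :
    Conforms u x :=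
  fun e he => (huv e he).trans (hvx e (huv.support_subset he))

end Conforms

section ElementaryVectors

variable {K : Type*} [Field K] {m n : Type*} [Fintype n]

def IsElementary (A : Matrix m n K) (y : n → K) : Prop :=
  y ≠ 0 ∧ A *ᵥ y = 0 ∧ ∀ z, A *ᵥ z = 0 → support z ⊂ support y → z = 0

theorem IsElementary.injective_mulVec_submatrix {A : Matrix m n K} {y : n → K}
    (hy : IsElementary A y) {s : Finset n} (hs : (s : Set n) ⊂ support y) :
    Injective (A.submatrix id ((↑) : s → n)).mulVec := by
  classical
  rw [← coe_mulVecLin, injective_iff_map_eq_zero]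
  intro c hc
  let z : n → K := fun e => if h : e ∈ s then c ⟨e, h⟩ else 0
  have hzs : support z ⊆ s := fun e he => by_contra fun h => he (dif_neg h)
  have hz : A *ᵥ z = 0 := by
    ext i
    rw [mulVec_apply_eq_sum_of_support_subset A (s := s) (fun e he => dif_neg he),
      ← Finset.sum_coe_sort s, ← congrFun hc i]
    simp [mulVec, dotProduct]
  ext t
  simpa [z] using congrFun (hy.2.2 z hz (hzs.trans_ssubset hs)) t

variable [LinearOrder K] [IsStrictOrderedRing K]

theorem sign_sub_eq_sign_of_abs_le {a b : K} (hba : |b| ≤ |a|) (hab : a - b ≠ 0) :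
    SignType.sign (a - b) = SignType.sign a := by
  rcases lt_trichotomy a 0 with ha | rfl | ha
  · rw [abs_of_neg ha] at hba
    rw [sign_neg ha, sign_neg (lt_of_le_of_ne (by linarith [neg_abs_le b]) hab)]
  · simp only [abs_zero, abs_nonpos_iff, zero_sub, neg_ne_zero] at hba hab
    exact absurd hba hab
  · rw [abs_of_pos ha] at hba
    rw [sign_pos ha, sign_pos (lt_of_le_of_ne (by linarith [le_abs_self b]) hab.symm)]

/-- The multiple of `z` to subtract is the one that first cancels a coordinate of `y`. -/
theorem exists_conforms_sub_smul (y : n → K) {z : n → K} (hz : z ≠ 0) :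
    ∃ t : K, ∃ a, z a ≠ 0 ∧ (y - t • z) a = 0 ∧ Conforms (y - t • z) y := by
  classical
  obtain ⟨a, ha, hmin⟩ := Finset.exists_min_image (Finset.univ.filter (z · ≠ 0))
    (fun e => |y e| / |z e|) (by simpa [Finset.Nonempty, Function.ne_iff] using hz)
  have hza : z a ≠ 0 := (Finset.mem_filter.mp ha).2
  refine ⟨y a / z a, a, hza, by simp [hza], fun e he => sign_sub_eq_sign_of_abs_le ?_ he⟩
  by_cases hze : z e = 0
  · simp [hze]
  rw [Pi.smul_apply, smul_eq_mul, abs_mul, abs_div, ← le_div_iff₀ (abs_pos.mpr hze)]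
  exact hmin e (by simp [hze])

theorem exists_isElementary_conforms (A : Matrix m n K) {x : n → K} (hx0 : x ≠ 0)
    (hx : A *ᵥ x = 0) : ∃ y, IsElementary A y ∧ Conforms y x := by
  induction hs : support x using WellFoundedLT.induction generalizing x with
  | _ s ih =>
  by_cases hel : ∀ z, A *ᵥ z = 0 → support z ⊂ support x → z = 0
  · exact ⟨x, ⟨hx0, hx, hel⟩, fun _ _ => rfl⟩
  push Not at hel
  obtain ⟨z, hz, hzx, hz0⟩ := hel
  obtain ⟨t, a, hza, hxa, hconf⟩ := exists_conforms_sub_smul x hz0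
  obtain ⟨f, hfx, hfz⟩ := Set.exists_of_ssubset hzx
  have hx'0 : x - t • z ≠ 0 := fun h =>
    hfx (by simpa [notMem_support.mp hfz] using congrFun h f)
  have hx's : support (x - t • z) ⊂ s :=
    hs ▸ ssubset_of_subset_not_subset hconf.support_subset fun h => h (hzx.subset hza) hxa
  obtain ⟨y, hy, hyx⟩ := ih _ hx's hx'0 (by rw [mulVec_sub, mulVec_smul, hx, hz, smul_zero,
    sub_zero]) rfl
  exact ⟨y, hy, hyx.trans hconf⟩

theorem IsElementary.abs_eq [Fintype m] [DecidableEq n] {A : Matrix m n K}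
    (hA : A.IsTotallyUnimodular) {y : n → K} (hy : IsElementary A y) {e₀ e : n}
    (he₀ : y e₀ ≠ 0) (he : y e ≠ 0) : |y e| = |y e₀| := by
  classical
  by_cases hee : e = e₀
  · rw [hee]
  set T : Finset n := (Finset.univ.filter (y · ≠ 0)).erase e₀
  have hT : ∀ {e}, e ∈ T ↔ e ≠ e₀ ∧ y e ≠ 0 := by simp [T]
  obtain ⟨f, hf⟩ := exists_det_submatrix_ne_zero _ (hy.injective_mulVec_submatrix (s := T)
    (ssubset_of_subset_not_subset (fun e he => (hT.mp he).2) fun h => (hT.mp (h he₀)).1 rfl))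
  have hyT : A.submatrix f (↑) *ᵥ (fun t : T => y t) = -(y e₀) • fun t => A (f t) e₀ := by
    ext t
    have h := congrFun hy.2.1 (f t)
    rw [mulVec_apply_eq_sum_of_support_subset A (s := insert e₀ T),
      Finset.sum_insert (by simp [hT]), ← Finset.sum_coe_sort T, Pi.zero_apply] at h
    · simp only [mulVec, dotProduct, submatrix_apply, Pi.smul_apply, smul_eq_mul]
      linear_combination h
    · intro e he
      by_contra h
      exact he (Finset.mem_insert.mpr (or_iff_not_imp_left.mpr fun h' => hT.mpr ⟨h', h⟩))
  rcases hA.eq_zero_or_abs_eq_of_mulVec_submatrix hf hyT ⟨e, hT.mpr ⟨hee, he⟩⟩ with h | h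
  · exact absurd h he
  · rwa [abs_neg] at h

end ElementaryVectors

section Circuits

variable {r m : ℕ} {A : Matrix (Fin r) (Fin m) ℤ}

theorem isCircuit_sign_of_isElementary (hA : A.IsTotallyUnimodular) {y : Fin m → ℚ}
    (hy : IsElementary (A.map (Int.castRingHom ℚ)) y) :
    IsCircuit A fun e => (SignType.sign (y e) : ℤ) := by
  obtain ⟨e₀, he₀⟩ : ∃ e, y e ≠ 0 := Function.ne_iff.mp hy.1
  have hcast : ∀ v : Fin m → ℤ, {e | v e ≠ 0} = support (Int.castRingHom ℚ ∘ v) := by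
    intro v; ext e; simp
  have hsign :
      Int.castRingHom ℚ ∘ (fun e => (SignType.sign (y e) : ℤ)) = |y e₀|⁻¹ • y := by
    ext e
    by_cases he : y e = 0
    · simp [he]
    · rw [Pi.smul_apply, smul_eq_mul, ← hy.abs_eq (hA.map _) he₀ he]
      simp only [Int.coe_castRingHom, Function.comp_apply, SignType.intCast_cast]
      rw [inv_mul_eq_div, eq_div_iff (abs_ne_zero.mpr he), sign_mul_abs]
  have hsupp : {e | (SignType.sign (y e) : ℤ) ≠ 0} = support y := by
    rw [hcast, hsign, support_const_smul_of_ne_zero _ _ (inv_ne_zero (abs_ne_zero.mpr he₀))]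
  refine ⟨fun e => ?_, fun h => ?_, (map_intCast_mulVec_eq_zero_iff A _).mp ?_,
    fun v hv0 hvk hsub => ?_⟩
  · rcases SignType.trichotomy (SignType.sign (y e)) with h | h | h <;> simp [h]
  · exact (Set.ext_iff.mp hsupp e₀).mpr he₀ (congrFun h e₀)
  · rw [hsign, mulVec_smul, hy.2.1, smul_zero]
  · rw [hsupp, hcast] at hsub ⊢
    by_contra hne
    refine hv0 (funext fun e => ?_)
    simpa using congrFun (hy.2.2 _ ((map_intCast_mulVec_eq_zero_iff A v).mpr hvk)
      (Set.ssubset_iff_subset_ne.mpr ⟨hsub, hne⟩)) e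

theorem exists_isCircuit_eq_sign (hA : A.IsTotallyUnimodular) {x : Fin m → ℤ} (hx0 : x ≠ 0)
    (hx : A *ᵥ x = 0) : ∃ C, IsCircuit A C ∧ ∀ e, C e ≠ 0 → C e = (x e).sign := by
  have hxq0 : Int.castRingHom ℚ ∘ x ≠ 0 := fun h =>
    hx0 (funext fun e => by simpa using congrFun h e)
  obtain ⟨y, hy, hyx⟩ :=
    exists_isElementary_conforms _ hxq0 ((map_intCast_mulVec_eq_zero_iff A x).mpr hx)
  refine ⟨_, isCircuit_sign_of_isElementary hA hy, fun e he => ?_⟩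
  have hye : y e ≠ 0 := fun h => he (by simp [h])
  simpa [Int.sign_eq_sign, sign_intCast] using congrArg (fun s : SignType => (s : ℤ)) (hyx e hye)

theorem IsCircuit.neg {C : Fin m → ℤ} (hC : IsCircuit A C) : IsCircuit A (-C) := by
  obtain ⟨hs, h0, hk, hmin⟩ := hC
  have hsupp : {e | (-C) e ≠ 0} = {e | C e ≠ 0} := by ext e; simp
  refine ⟨fun e => ?_, neg_ne_zero.mpr h0, by rw [mulVec_neg, hk, neg_zero], ?_⟩
  · rcases hs e with h | h | h <;> simp [h]
  · rw [hsupp]; exact hmin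

theorem CircuitReversal.mulVec_sub_eq_zero {O O' : Fin m → ℤ} (h : CircuitReversal A O O') :
    A *ᵥ (O' - O) = 0 := by
  obtain ⟨C, hC, hcomp, hflip, hfix⟩ := h
  have : O' - O = -2 • C := by
    ext e
    by_cases he : C e = 0
    · simp [hfix e he, he]
    · simp [hflip e he, hcomp e he]; ring
  rw [this, mulVec_smul, hC.2.2.1, smul_zero]

theorem CircEquiv.mulVec_sub_eq_zero {O O' : Fin m → ℤ} (h : CircEquiv A O O') :
    A *ᵥ (O' - O) = 0 := by
  induction h with
  | rel _ _ h => exact h.mulVec_sub_eq_zero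
  | refl => rw [sub_self, mulVec_zero]
  | symm _ _ _ ih => rw [← neg_sub, mulVec_neg, ih, neg_zero]
  | trans _ _ _ _ _ ih₁ ih₂ => rw [← sub_add_sub_cancel, mulVec_add, ih₁, ih₂, add_zero]

theorem circuitReversal_sub_two_smul {O C : Fin m → ℤ} (hC : IsCircuit A C)
    (hcomp : ∀ e, C e ≠ 0 → O e = C e) : CircuitReversal A O (O - 2 • C) :=
  ⟨C, hC, hcomp, fun e he => by simp [hcomp e he]; ring, fun e he => by simp [he]⟩

theorem IsOrientation.sub_two_smul {O C : Fin m → ℤ} (hO : IsOrientation O)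
    (hcomp : ∀ e, C e ≠ 0 → O e = C e) : IsOrientation (O - 2 • C) := by
  intro e
  by_cases he : C e = 0
  · simpa [he] using hO e
  · rcases hO e with h | h <;> simp [← hcomp e he, h]

theorem sum_mul_sub_two_smul (w : Fin m → ℝ) (O C : Fin m → ℤ) :
    ∑ e, w e * ((O - 2 • C) e : ℝ) =
      ∑ e, w e * (O e : ℝ) - 2 * ∑ e, w e * (C e : ℝ) := by
  rw [Finset.mul_sum, ← Finset.sum_sub_distrib]
  exact Finset.sum_congr rfl fun e _ => by
    rw [Pi.sub_apply, Pi.smul_apply, nsmul_eq_mul]; push_cast; ring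

end Circuits

theorem exists_sigmaCompatible_circEquiv {r m : ℕ} (A : Matrix (Fin r) (Fin m) ℤ)
    {w : Fin m → ℝ}
    (hw : ∀ C : Fin m → ℤ, IsCircuit A C → ∑ e, w e * (C e : ℝ) ≠ 0)
    {O : Fin m → ℤ} (hO : IsOrientation O) :
    ∃ O', IsOrientation O' ∧ SigmaCompatible A w O' ∧ CircEquiv A O O' := by
  classical
  let S := (Fintype.piFinset fun _ => ({1, -1} : Finset ℤ)).filter (CircEquiv A O)
  have hS : ∀ {O'}, O' ∈ S ↔ IsOrientation O' ∧ CircEquiv A O O' := by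
    simp [S, IsOrientation, Fintype.mem_piFinset]
  obtain ⟨O', hO'S, hmax⟩ := S.exists_max_image (fun O' => ∑ e, w e * (O' e : ℝ))
    ⟨O, hS.mpr ⟨hO, Relation.EqvGen.refl O⟩⟩
  obtain ⟨hO', hOO'⟩ := hS.mp hO'S
  refine ⟨O', hO', fun C hC hcomp => ?_, hOO'⟩
  by_contra hle
  have hneg : ∑ e, w e * (C e : ℝ) < 0 := lt_of_le_of_ne (not_lt.mp hle) (hw C hC)
  have hrev := circuitReversal_sub_two_smul hC hcomp
  have := hmax (O' - 2 • C) (hS.mpr ⟨hO'.sub_two_smul hcomp,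
    Relation.EqvGen.trans _ _ _ hOO' (Relation.EqvGen.rel _ _ hrev)⟩)
  rw [sum_mul_sub_two_smul] at this
  linarith

theorem eq_of_sigmaCompatible_of_circEquiv {r m : ℕ} {A : Matrix (Fin r) (Fin m) ℤ}
    (hA : A.IsTotallyUnimodular) {w : Fin m → ℝ} {O₁ O₂ : Fin m → ℤ}
    (hO₁ : IsOrientation O₁) (hO₂ : IsOrientation O₂)
    (hσ₁ : SigmaCompatible A w O₁) (hσ₂ : SigmaCompatible A w O₂)
    (h : CircEquiv A O₁ O₂) :
    O₁ = O₂ := by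
  by_contra hne
  obtain ⟨C, hC, hsign⟩ :=
    exists_isCircuit_eq_sign hA (sub_ne_zero.mpr (Ne.symm hne)) h.mulVec_sub_eq_zero
  have hcomp : ∀ e, C e ≠ 0 → O₂ e = C e ∧ O₁ e = -C e := by
    intro e he
    have := hsign e he
    rcases hO₁ e with h₁ | h₁ <;> rcases hO₂ e with h₂ | h₂ <;>
      simp_all [show Int.sign 2 = 1 from rfl]
  have h₂ := hσ₂ C hC fun e he => (hcomp e he).1
  have h₁ := hσ₁ (-C) hC.neg fun e he => (hcomp e (neg_ne_zero.mp he)).2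
  simp only [Pi.neg_apply, Int.cast_neg, mul_neg, Finset.sum_neg_distrib] at h₁
  linarith

theorem stmt8_general {r m : ℕ} (A : Matrix (Fin r) (Fin m) ℤ)
    (hTU : A.IsTotallyUnimodular)
    (w : Fin m → ℝ) (hw : ∀ C : Fin m → ℤ, IsCircuit A C → ∑ e, w e * (C e : ℝ) ≠ 0)
    (O : Fin m → ℤ) (hO : IsOrientation O) :
    ∃! O' : Fin m → ℤ, IsOrientation O' ∧ SigmaCompatible A w O' ∧ CircEquiv A O O' := by
  obtain ⟨O', hO', hσ, hOO'⟩ := exists_sigmaCompatible_circEquiv A hw hO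
  refine ⟨O', ⟨hO', hσ, hOO'⟩, fun O'' ⟨hO'', hσ', hOO''⟩ => ?_⟩
  exact eq_of_sigmaCompatible_of_circEquiv hTU hO'' hO' hσ' hσ
    (Relation.EqvGen.trans _ _ _ (Relation.EqvGen.symm _ _ hOO'') hOO')

/-- Every circuit-reversal equivalence class of orientations contains exactly one
σ-compatible orientation. -/
theorem stmt8 {r m : ℕ} (A : Matrix (Fin r) (Fin m) ℤ)
    (hTU : A.IsTotallyUnimodular) (hrank : (A.map ((↑) : ℤ → ℝ)).rank = r)
    (w : Fin m → ℝ) (hw : ∀ C : Fin m → ℤ, IsCircuit A C → ∑ e, w e * (C e : ℝ) ≠ 0)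
    (O : Fin m → ℤ) (hO : IsOrientation O) :
    ∃! O' : Fin m → ℤ, IsOrientation O' ∧ SigmaCompatible A w O' ∧ CircEquiv A O O' :=
  stmt8_general A hTU w hw O hO
end

section
/- The map ℤ^E/(Λ_A + Λ*_A) → ℤ^r/(AAᵀℤ^r) given on coset representatives by γ ↦ Aγ is well-defined and is an isomorphism of abelian groups; in other words, the Jacobian group Jac(M) is isomorphic to the cokernel of the integer matrix AAᵀ. -/
open Matrix

/-!
A totally unimodular matrix of full row rank has an `r × r` submatrix of nonzero, hence unit,
determinant, so `γ ↦ Aγ` maps `ℤ^E` onto `ℤ^r`. Composed with the projection to the cokernel of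
`AAᵀ` it stays surjective, and its kernel is `{γ | Aγ ∈ A (Aᵀ ℤ^r)} = ker A + Aᵀ ℤ^r`.
-/

section QuotientIso

variable {R M N P : Type*} [CommRing R] [AddCommGroup M] [AddCommGroup N] [AddCommGroup P]
  [Module R M] [Module R N] [Module R P]

theorem LinearMap.ker_mkQ_range_comp_comp (f : M →ₗ[R] N) (g : P →ₗ[R] M) :
    LinearMap.ker ((LinearMap.range (f ∘ₗ g)).mkQ ∘ₗ f) =
      LinearMap.ker f ⊔ LinearMap.range g := by
  rw [LinearMap.ker_comp, Submodule.ker_mkQ, LinearMap.range_comp, Submodule.comap_map_eq,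
    sup_comm]

noncomputable def LinearMap.quotKerSupRangeEquiv (f : M →ₗ[R] N) (g : P →ₗ[R] M)
    (hf : Function.Surjective f) :
    (M ⧸ (LinearMap.ker f ⊔ LinearMap.range g)) ≃ₗ[R] N ⧸ LinearMap.range (f ∘ₗ g) :=
  (Submodule.quotEquivOfEq _ _ (f.ker_mkQ_range_comp_comp g).symm).trans
    (LinearMap.quotKerEquivOfSurjective _ ((Submodule.mkQ_surjective _).comp hf))

theorem LinearMap.quotKerSupRangeEquiv_mk (f : M →ₗ[R] N) (g : P →ₗ[R] M)
    (hf : Function.Surjective f) (x : M) :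
    f.quotKerSupRangeEquiv g hf (Submodule.Quotient.mk x) = Submodule.Quotient.mk (f x) :=
  rfl

end QuotientIso

namespace Matrix

theorem exists_isUnit_submatrix_of_rank_eq {K n : Type*} [Field K] [Fintype n] {r : ℕ}
    (A : Matrix (Fin r) n K) (hA : A.rank = r) : ∃ g : Fin r → n, IsUnit (A.submatrix id g) := by
  obtain ⟨κ, a, ha, hspan, hli⟩ := exists_linearIndependent' K A.col
  have : Finite κ := Finite.of_injective a ha
  have : Fintype κ := Fintype.ofFinite κ
  have hcard : Fintype.card κ = r := by
    rw [linearIndependent_iff_card_eq_finrank_span.mp hli, Set.finrank, hspan,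
      ← rank_eq_finrank_span_cols, hA]
  let e : Fin r ≃ κ := (Fintype.equivFinOfCardEq hcard).symm
  refine ⟨a ∘ e, linearIndependent_cols_iff_isUnit.mp ?_⟩
  exact hli.comp e e.injective

theorem mulVec_surjective_of_isUnit_det_submatrix {R m n : Type*} [CommRing R] [Fintype m]
    [DecidableEq m] [Fintype n] (A : Matrix m n R) (g : m → n)
    (hg : IsUnit (A.submatrix id g).det) :
    Function.Surjective A.mulVec := by
  have hsub : Function.Surjective (A.submatrix id g).mulVecLin :=
    mulVec_surjective_iff_isUnit.mpr ((isUnit_iff_isUnit_det _).mpr hg)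
  rw [← coe_mulVecLin, ← LinearMap.range_eq_top, eq_top_iff, ← LinearMap.range_eq_top.mpr hsub,
    range_mulVecLin, range_mulVecLin]
  exact Submodule.span_mono (Set.range_comp_subset_range g A.col)

theorem IsTotallyUnimodular.isUnit_det_submatrix {R m n : Type*} [CommRing R]
    {A : Matrix m n R} (hA : A.IsTotallyUnimodular) {k : ℕ} (f : Fin k → m) (g : Fin k → n)
    (hdet : (A.submatrix f g).det ≠ 0) : IsUnit (A.submatrix f g).det := by
  obtain ⟨s, hs⟩ := (isTotallyUnimodular_iff A).mp hA k f g
  rw [← hs] at hdet ⊢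
  rcases s with _ | _ | _
  · exact absurd SignType.coe_zero hdet
  · simp
  · simp

theorem IsTotallyUnimodular.mulVec_surjective {K n : Type*} [Field K] [CharZero K] [Fintype n]
    {r : ℕ} {A : Matrix (Fin r) n ℤ} (hA : A.IsTotallyUnimodular)
    (hrank : (A.map ((↑) : ℤ → K)).rank = r) : Function.Surjective A.mulVec := by
  obtain ⟨g, hg⟩ := exists_isUnit_submatrix_of_rank_eq _ hrank
  have hdetK : ((A.submatrix id g).det : K) ≠ 0 := by
    rw [Int.cast_det]
    exact ((isUnit_iff_isUnit_det _).mp hg).ne_zero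
  exact mulVec_surjective_of_isUnit_det_submatrix A g
    (hA.isUnit_det_submatrix id g (by exact_mod_cast hdetK))

end Matrix

/-- The Jacobian group `ℤ^E/(Λ_A + Λ*_A)` is isomorphic to the cokernel `ℤ^r/(AAᵀℤ^r)` of
`AAᵀ`, via the map induced by `γ ↦ Aγ`. -/
theorem stmt12 {r m : ℕ} (A : Matrix (Fin r) (Fin m) ℤ)
    (hTU : A.IsTotallyUnimodular) (hrank : (A.map ((↑) : ℤ → ℝ)).rank = r) :
    ∃ f : ((Fin m → ℤ) ⧸ (LinearMap.ker (Matrix.mulVecLin A) ⊔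
            LinearMap.range (Matrix.mulVecLin Aᵀ))) ≃ₗ[ℤ]
          ((Fin r → ℤ) ⧸ LinearMap.range (Matrix.mulVecLin (A * Aᵀ))),
      ∀ γ : Fin m → ℤ,
        f (Submodule.Quotient.mk γ) = Submodule.Quotient.mk (A.mulVec γ) := by
  rw [mulVecLin_mul]
  exact ⟨A.mulVecLin.quotKerSupRangeEquiv Aᵀ.mulVecLin (hTU.mulVec_surjective hrank),
    A.mulVecLin.quotKerSupRangeEquiv_mk _ _⟩
end
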